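/- Let λ ∈ ℤ^D \ {0} and let (φ, ψ) be a λ-mode wave solution on (0, t_{λ*}]. Then there exist real numbers ψ_∞ and φ̃_∞ such that ψ(t) → ψ_∞ and φ̃(t) → φ̃_∞ as t → 0⁺, and there is C > 0 depending only on D and p_1,…,p_D with |ψ(t) − ψ_∞| + |φ̃(t) − φ̃_∞| ≤ C·τ_λ(t)²·(1 + log(t_{λ*}/t)²)·E_{λ,low}(t_{λ*})^{1/2} ≤ C²·τ_λ(t)·E_{λ,low}(t_{λ*})^{1/2} for all t ∈ (0, t_{λ*}]. Moreover ψ_∞² + φ̃_∞² ≤ C_low·E_{λ,low}(t_{λ*}), where C_low depends only on D and p_1,…,p_D. -/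

import Mathlib

open Real Filter MeasureTheory Topology

/-!
Write `ℓ = log (t / t_*)`. In the variables `ψ` and `φ̃` the mode equations read
`t ψ' = -τ² φ` and `t φ̃' = τ² φ ℓ` with `φ = φ̃ + ℓ ψ`, so both derivatives, as well as
`E_low' / E_low`, are bounded by the weight `τ² (1 + ℓ²) / t` (Cauchy–Schwarz). Since
`τ(u)² ≤ (u / t)^a τ(t)²` with `a = 2 - 2 max pᵢ > 0`, and powers beat logarithms, this weight is
integrable at `0` with `∫₀ᵗ ≲ τ(t)² (1 + ℓ(t)²)`. Grönwall then bounds `E_low` on `(0, t_*]` by a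
constant times `E_low(t_*)`, and integrating the derivative bounds gives the limits with the
stated rate.
-/

/-- τ_λ(t) = (∑ᵢ t^(2-2pᵢ) λᵢ²)^(1/2). -/
noncomputable def tau {D : ℕ} (p : Fin D → ℝ) (lam : Fin D → ℤ) (t : ℝ) : ℝ :=
  Real.sqrt (∑ i, t ^ (2 - 2 * p i) * ((lam i : ℝ)) ^ 2)

/-- A λ-mode wave solution on the set `I`: t φ' = ψ and t ψ' = -τ_λ(t)² φ. -/
def IsWaveSol {D : ℕ} (p : Fin D → ℝ) (lam : Fin D → ℤ) (φ ψ : ℝ → ℝ) (I : Set ℝ) : Prop :=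
  ∀ t ∈ I, HasDerivAt φ (ψ t / t) t ∧ HasDerivAt ψ (-(tau p lam t ^ 2) * φ t / t) t

/-- The renormalized field φ̃(t) = φ(t) - ψ(t) log(t/t_{λ*}). -/
noncomputable def phiTilde (φ ψ : ℝ → ℝ) (tstar t : ℝ) : ℝ :=
  φ t - ψ t * Real.log (t / tstar)

/-- The low-frequency wave energy E_{λ,low}(t) = ψ(t)² + φ̃(t)². -/
noncomputable def Elow (φ ψ : ℝ → ℝ) (tstar t : ℝ) : ℝ :=
  ψ t ^ 2 + phiTilde φ ψ tstar t ^ 2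

open Set

lemma exists_pos_forall_le {ι : Type*} [Finite ι] {e : ι → ℝ} (he : ∀ i, 0 < e i) :
    ∃ a, 0 < a ∧ ∀ i, a ≤ e i := by
  have hle : ∀ᶠ a in 𝓝[>] (0 : ℝ), ∀ i, a ≤ e i :=
    eventually_all.2 fun i => (eventually_le_nhds (he i)).filter_mono nhdsWithin_le_nhds
  exact (eventually_mem_nhdsWithin.and hle).exists

lemma one_add_log_sq_mul_rpow_le {s c : ℝ} (hs0 : 0 < s) (hs1 : s ≤ 1) (hc : 0 < c) :
    (1 + log s ^ 2) * s ^ c ≤ 1 + 4 / c ^ 2 := by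
  have hlog : |log s * s ^ (c / 2)| ≤ 2 / c := by
    simpa [one_div_div] using (abs_log_mul_self_rpow_lt s (c / 2) hs0 hs1 (by positivity)).le
  have hsq : log s ^ 2 * s ^ c = (log s * s ^ (c / 2)) ^ 2 := by
    rw [mul_pow, ← rpow_natCast (s ^ (c / 2)), ← rpow_mul hs0.le]; norm_num
  have hpow : s ^ c ≤ 1 := rpow_le_one hs0.le hs1 hc.le
  calc (1 + log s ^ 2) * s ^ c = s ^ c + (log s * s ^ (c / 2)) ^ 2 := by rw [← hsq]; ring
    _ ≤ 1 + (2 / c) ^ 2 := add_le_add hpow (sq_le_sq' (abs_le.1 hlog).1 (abs_le.1 hlog).2)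
    _ = 1 + 4 / c ^ 2 := by ring

lemma mul_one_add_log_sq_le {a b u t Tu Tt : ℝ} (ha : 0 < a) (hb : 0 < b) (hu : 0 < u)
    (hut : u ≤ t) (hTt : 0 ≤ Tt) (hT : Tu ≤ (u / t) ^ a * Tt) :
    Tu * (1 + log (b / u) ^ 2) ≤
      2 * (2 + 16 / a ^ 2) * (u / t) ^ (a / 2) * (Tt * (1 + log (b / t) ^ 2)) := by
  set s := u / t with hs
  set ℓ := log (b / t)
  have ht : 0 < t := hu.trans_le hut
  have hs0 : 0 < s := div_pos hu ht
  have hs1 : s ≤ 1 := (div_le_one ht).2 hut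
  have hsplit : log (b / u) = ℓ - log s := by
    rw [← log_div (div_pos hb ht).ne' hs0.ne', hs]; field_simp
  have hhalf : s ^ a = s ^ (a / 2) * s ^ (a / 2) := by rw [← rpow_add hs0]; ring_nf
  have hpow : s ^ (a / 2) ≤ 1 := rpow_le_one hs0.le hs1 (by positivity)
  have hlog : log s ^ 2 * s ^ (a / 2) ≤ 1 + 16 / a ^ 2 := by
    have h := one_add_log_sq_mul_rpow_le hs0 hs1 (half_pos ha)
    have h16 : 4 / (a / 2) ^ 2 = 16 / a ^ 2 := by field_simp; norm_num
    nlinarith [rpow_nonneg hs0.le (a / 2)]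
  have hsum : 1 + log (b / u) ^ 2 ≤ 2 * (1 + ℓ ^ 2) + 2 * log s ^ 2 := by
    rw [hsplit]; nlinarith [sq_nonneg (ℓ + log s)]
  have hinner : 2 * s ^ (a / 2) * (1 + ℓ ^ 2) + 2 * (log s ^ 2 * s ^ (a / 2))
      ≤ 2 * (2 + 16 / a ^ 2) * (1 + ℓ ^ 2) := by
    nlinarith [sq_nonneg ℓ, mul_nonneg (sub_nonneg.2 hpow) (sq_nonneg ℓ),
      mul_nonneg (by positivity : (0 : ℝ) ≤ 1 + 16 / a ^ 2) (sq_nonneg ℓ)]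
  calc Tu * (1 + log (b / u) ^ 2)
      ≤ s ^ a * Tt * (2 * (1 + ℓ ^ 2) + 2 * log s ^ 2) :=
        mul_le_mul hT hsum (by positivity) (by positivity)
    _ = s ^ (a / 2) * Tt * (2 * s ^ (a / 2) * (1 + ℓ ^ 2) + 2 * (log s ^ 2 * s ^ (a / 2))) := by
        rw [hhalf]; ring
    _ ≤ s ^ (a / 2) * Tt * (2 * (2 + 16 / a ^ 2) * (1 + ℓ ^ 2)) := by gcongr
    _ = 2 * (2 + 16 / a ^ 2) * s ^ (a / 2) * (Tt * (1 + ℓ ^ 2)) := by ring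

lemma log_div_sq_comm (x y : ℝ) : log (x / y) ^ 2 = log (y / x) ^ 2 := by
  rw [← inv_div, log_inv, neg_sq]

lemma abs_mul_add_mul_le_sqrt {X Y l m : ℝ} (hm : m ^ 2 ≤ 1 + l ^ 2) :
    |m * (Y + l * X)| ≤ (1 + l ^ 2) * √(X ^ 2 + Y ^ 2) := by
  have hcs : (Y + l * X) ^ 2 ≤ (1 + l ^ 2) * (X ^ 2 + Y ^ 2) := by
    nlinarith [sq_nonneg (l * Y - X)]
  calc |m * (Y + l * X)| ≤ √((1 + l ^ 2) ^ 2 * (X ^ 2 + Y ^ 2)) := by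
        refine abs_le_sqrt ?_
        rw [mul_pow, sq (1 + l ^ 2), mul_assoc]
        exact mul_le_mul hm hcs (sq_nonneg _) (by positivity)
    _ = (1 + l ^ 2) * √(X ^ 2 + Y ^ 2) := by
        rw [sqrt_mul (by positivity), sqrt_sq (by positivity)]

lemma two_mul_abs_mul_le {X Y l : ℝ} :
    2 * |(Y + l * X) * (l * Y - X)| ≤ (1 + l ^ 2) * (X ^ 2 + Y ^ 2) := by
  rw [abs_mul]
  nlinarith [two_mul_le_add_sq |Y + l * X| |l * Y - X|, sq_abs (Y + l * X), sq_abs (l * Y - X)]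

lemma integral_rpow_div_self {c t : ℝ} (hc : 0 < c) (ht : 0 < t) :
    IntegrableOn (fun u => (u / t) ^ c / u) (Ioc 0 t) ∧
      ∫ u in Ioc 0 t, (u / t) ^ c / u = 1 / c := by
  have heq : EqOn (fun u => (u / t) ^ c / u) (fun u => t ^ (-c) * u ^ (c - 1)) (Ioc 0 t) := by
    intro u hu
    simp only
    rw [div_rpow hu.1.le ht.le, rpow_neg ht.le, rpow_sub_one hu.1.ne']
    ring
  have hint : IntervalIntegrable (fun u => t ^ (-c) * u ^ (c - 1)) volume 0 t :=
    (intervalIntegral.intervalIntegrable_rpow' (by linarith)).const_mul _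
  rw [intervalIntegrable_iff_integrableOn_Ioc_of_le ht.le] at hint
  refine ⟨hint.congr_fun heq.symm measurableSet_Ioc, ?_⟩
  rw [setIntegral_congr_fun measurableSet_Ioc heq, ← intervalIntegral.integral_of_le ht.le,
    intervalIntegral.integral_const_mul, integral_rpow (Or.inl (by linarith)),
    sub_add_cancel, zero_rpow hc.ne', sub_zero, ← mul_div_assoc, ← rpow_add ht, neg_add_cancel,
    rpow_zero]

lemma integral_div_self_le_of_le_rpow {h : ℝ → ℝ} {c K t : ℝ} (hc : 0 < c) (ht : 0 < t)
    (hh : ContinuousOn h (Ioc 0 t)) (h0 : ∀ u ∈ Ioc 0 t, 0 ≤ h u)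
    (hle : ∀ u ∈ Ioc 0 t, h u ≤ K * (u / t) ^ c) :
    IntegrableOn (fun u => h u / u) (Ioc 0 t) ∧ ∫ u in Ioc 0 t, h u / u ≤ K / c := by
  obtain ⟨hint, hval⟩ := integral_rpow_div_self hc ht
  have hbd : ∀ u ∈ Ioc 0 t, h u / u ≤ K * ((u / t) ^ c / u) := fun u hu => by
    rw [← mul_div_assoc]; exact div_le_div_of_nonneg_right (hle u hu) hu.1.le
  have hmeas : AEStronglyMeasurable (fun u => h u / u) (volume.restrict (Ioc 0 t)) :=
    (hh.div continuousOn_id fun u hu => hu.1.ne').aestronglyMeasurable measurableSet_Ioc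
  have hint' : IntegrableOn (fun u => h u / u) (Ioc 0 t) := by
    refine (hint.const_mul K).mono' hmeas ((ae_restrict_iff' measurableSet_Ioc).2
      (ae_of_all _ fun u hu => ?_))
    rw [Real.norm_eq_abs, abs_of_nonneg (div_nonneg (h0 u hu) hu.1.le)]
    exact hbd u hu
  refine ⟨hint', ?_⟩
  calc ∫ u in Ioc 0 t, h u / u ≤ ∫ u in Ioc 0 t, K * ((u / t) ^ c / u) :=
        setIntegral_mono_on hint' (hint.const_mul K) measurableSet_Ioc hbd
    _ = K / c := by rw [integral_const_mul, hval]; ring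

lemma exists_tendsto_abs_sub_le_integral {f h : ℝ → ℝ} {b : ℝ} (hb : 0 < b)
    (hf : ∀ u ∈ Ioc 0 b, DifferentiableAt ℝ f u) (hh : IntegrableOn h (Ioc 0 b))
    (hbd : ∀ u ∈ Ioc 0 b, |deriv f u| ≤ h u) :
    ∃ l, Tendsto f (𝓝[>] 0) (𝓝 l) ∧ ∀ t ∈ Ioc 0 b, |f t - l| ≤ ∫ u in Ioc 0 t, h u := by
  have hint : IntervalIntegrable (deriv f) volume 0 b :=
    (intervalIntegrable_iff_integrableOn_Ioc_of_le hb.le).2 <|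
      hh.mono' (measurable_deriv f).aestronglyMeasurable ((ae_restrict_iff' measurableSet_Ioc).2
        (ae_of_all _ fun u hu => by rw [Real.norm_eq_abs]; exact hbd u hu))
  have hmem : ∀ t ∈ Ioc 0 b, t ∈ uIcc 0 b := fun t ht => by
    rw [uIcc_of_le hb.le]; exact Ioc_subset_Icc_self ht
  set l := f b - ∫ u in (0)..b, deriv f u
  have hftc : ∀ t ∈ Ioc 0 b, f t - l = ∫ u in (0)..t, deriv f u := by
    intro t ht
    have htb : IntervalIntegrable (deriv f) volume t b :=
      hint.mono_set (uIcc_subset_uIcc (hmem t ht) right_mem_uIcc)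
    have hdiff : ∫ u in t..b, deriv f u = f b - f t := by
      refine intervalIntegral.integral_eq_sub_of_hasDerivAt (fun u hu => ?_) htb
      rw [uIcc_of_le ht.2] at hu
      exact (hf u ⟨ht.1.trans_le hu.1, hu.2⟩).hasDerivAt
    have hsplit := intervalIntegral.integral_add_adjacent_intervals
      (hint.mono_set (uIcc_subset_uIcc left_mem_uIcc (hmem t ht))) htb
    rw [hdiff] at hsplit
    linarith
  refine ⟨l, ?_, fun t ht => ?_⟩
  · have hprim := ((intervalIntegral.continuousOn_primitive_interval' hint left_mem_uIcc) 0
      left_mem_uIcc).tendsto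
    rw [intervalIntegral.integral_same] at hprim
    rw [← nhdsWithin_Ioc_eq_nhdsGT hb]
    have := (hprim.mono_left (nhdsWithin_mono _ fun t ht => hmem t ht)).const_add l
    rw [add_zero] at this
    exact this.congr' (eventually_mem_nhdsWithin.mono fun t ht => by rw [← hftc t ht]; ring)
  · have h0t : IntegrableOn (deriv f) (Ioc 0 t) :=
      (intervalIntegrable_iff_integrableOn_Ioc_of_le ht.1.le).1
        (hint.mono_set (uIcc_subset_uIcc left_mem_uIcc (hmem t ht)))
    rw [hftc t ht]
    calc |∫ u in (0)..t, deriv f u| ≤ ∫ u in (0)..t, |deriv f u| :=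
          intervalIntegral.abs_integral_le_integral_abs ht.1.le
      _ = ∫ u in Ioc 0 t, |deriv f u| := intervalIntegral.integral_of_le ht.1.le
      _ ≤ ∫ u in Ioc 0 t, h u := setIntegral_mono_on h0t.abs
          (hh.mono_set (Ioc_subset_Ioc_right ht.2)) measurableSet_Ioc
          fun u hu => hbd u ⟨hu.1, hu.2.trans ht.2⟩

lemma le_mul_exp_integral_of_neg_mul_le_deriv {E E' g : ℝ → ℝ} {a b : ℝ} (hab : a ≤ b)
    (hE : ∀ u ∈ Icc a b, HasDerivAt E (E' u) u) (hg : ContinuousOn g (Icc a b))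
    (hbound : ∀ u ∈ Ioo a b, -(g u * E u) ≤ E' u) :
    E a ≤ E b * exp (∫ x in a..b, g x) := by
  have hgint : IntervalIntegrable g volume a b := hg.intervalIntegrable_of_Icc hab
  set I : ℝ → ℝ := fun u => ∫ x in a..u, g x
  have hI : ∀ u ∈ Ioo a b, HasDerivAt I (g u) u := fun u hu =>
    intervalIntegral.integral_hasDerivAt_right
      (hgint.mono_set (uIcc_subset_uIcc left_mem_uIcc
        (by rw [uIcc_of_le hab]; exact Ioo_subset_Icc_self hu)))
      ((hg.mono Ioo_subset_Icc_self).stronglyMeasurableAtFilter isOpen_Ioo u hu)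
      (hg.continuousAt (Icc_mem_nhds hu.1 hu.2))
  have hIcont : ContinuousOn I (Icc a b) := by
    rw [← uIcc_of_le hab]
    exact intervalIntegral.continuousOn_primitive_interval' hgint left_mem_uIcc
  have hmono : MonotoneOn (fun u => E u * exp (I u)) (Icc a b) := by
    refine monotoneOn_of_hasDerivWithinAt_nonneg (convex_Icc a b)
      (f' := fun u => E' u * exp (I u) + E u * (exp (I u) * g u))
      (fun u hu => (hE u hu).continuousAt.continuousWithinAt.mul (hIcont u hu).rexp)
      (fun u hu => ?_) (fun u hu => ?_)
    all_goals rw [interior_Icc] at hu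
    · exact ((hE u (Ioo_subset_Icc_self hu)).mul (hI u hu).exp).hasDerivWithinAt
    · have := hbound u hu
      have := exp_pos (I u)
      nlinarith
  simpa [I] using hmono (left_mem_Icc.2 hab) (right_mem_Icc.2 hab) hab

section Tau

variable {D : ℕ} (p : Fin D → ℝ) (lam : Fin D → ℤ)

lemma tau_sq {t : ℝ} (ht : 0 ≤ t) :
    tau p lam t ^ 2 = ∑ i, t ^ (2 - 2 * p i) * (lam i : ℝ) ^ 2 :=
  sq_sqrt (Finset.sum_nonneg fun i _ => by positivity)

lemma tau_sq_le_rpow_mul {a u t : ℝ} (hai : ∀ i, a ≤ 2 - 2 * p i) (hu : 0 < u) (hut : u ≤ t) :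
    tau p lam u ^ 2 ≤ (u / t) ^ a * tau p lam t ^ 2 := by
  have ht := hu.trans_le hut
  rw [tau_sq p lam hu.le, tau_sq p lam ht.le, Finset.mul_sum]
  refine Finset.sum_le_sum fun i _ => ?_
  have hsplit : u ^ (2 - 2 * p i) = (u / t) ^ (2 - 2 * p i) * t ^ (2 - 2 * p i) := by
    rw [← mul_rpow (div_pos hu ht).le ht.le, div_mul_cancel₀ u ht.ne']
  rw [hsplit, mul_assoc]
  exact mul_le_mul_of_nonneg_right
    (rpow_le_rpow_of_exponent_ge (div_pos hu ht) ((div_le_one ht).2 hut) (hai i)) (by positivity)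

lemma continuousOn_tau : ContinuousOn (tau p lam) (Ioi 0) := by
  refine (continuousOn_finsetSum _ fun i _ => ?_).sqrt
  exact (continuousOn_id.rpow_const fun t ht => Or.inl (ne_of_gt ht)).mul continuousOn_const

end Tau

noncomputable def lowFreqRate {D : ℕ} (p : Fin D → ℝ) (lam : Fin D → ℤ) (tstar t : ℝ) : ℝ :=
  tau p lam t ^ 2 * (1 + log (tstar / t) ^ 2)

section LowFreqRate

variable {D : ℕ} {p : Fin D → ℝ} {lam : Fin D → ℤ} {a tstar : ℝ}

lemma lowFreqRate_nonneg (t : ℝ) : 0 ≤ lowFreqRate p lam tstar t := by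
  unfold lowFreqRate; positivity

lemma continuousOn_lowFreqRate (hts : 0 < tstar) :
    ContinuousOn (lowFreqRate p lam tstar) (Ioi 0) := by
  have hlog : ContinuousOn (fun t => log (tstar / t)) (Ioi 0) :=
    (continuousOn_const.div continuousOn_id fun t ht => ne_of_gt ht).log
      fun t ht => (div_pos hts ht).ne'
  exact ((continuousOn_tau p lam).pow 2).mul (continuousOn_const.add (hlog.pow 2))

lemma lowFreqRate_le_rpow_mul (ha : 0 < a) (hai : ∀ i, a ≤ 2 - 2 * p i) (hts : 0 < tstar)
    {u t : ℝ} (hu : 0 < u) (hut : u ≤ t) :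
    lowFreqRate p lam tstar u ≤
      2 * (2 + 16 / a ^ 2) * (u / t) ^ (a / 2) * lowFreqRate p lam tstar t :=
  mul_one_add_log_sq_le ha hts hu hut (sq_nonneg _) (tau_sq_le_rpow_mul p lam hai hu hut)

lemma integral_lowFreqRate_div_le (ha : 0 < a) (hai : ∀ i, a ≤ 2 - 2 * p i) (hts : 0 < tstar)
    {t : ℝ} (ht : 0 < t) :
    IntegrableOn (fun u => lowFreqRate p lam tstar u / u) (Ioc 0 t) ∧
      ∫ u in Ioc 0 t, lowFreqRate p lam tstar u / u ≤
        4 * (2 + 16 / a ^ 2) / a * lowFreqRate p lam tstar t := by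
  obtain ⟨hint, hle⟩ := integral_div_self_le_of_le_rpow (half_pos ha) ht
    (K := 2 * (2 + 16 / a ^ 2) * lowFreqRate p lam tstar t)
    ((continuousOn_lowFreqRate hts).mono fun u hu => hu.1) (fun u _ => lowFreqRate_nonneg u)
    (fun u hu => (lowFreqRate_le_rpow_mul ha hai hts hu.1 hu.2).trans_eq (by ring))
  refine ⟨hint, hle.trans_eq ?_⟩
  field_simp
  ring

lemma tau_mul_one_add_log_sq_le (ha : 0 < a) (hai : ∀ i, a ≤ 2 - 2 * p i)
    (htau : tau p lam tstar = 1) {t : ℝ} (ht : 0 < t) (hts : t ≤ tstar) :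
    tau p lam t * (1 + log (tstar / t) ^ 2) ≤ 1 + 16 / a ^ 2 := by
  set s := t / tstar
  have hs0 : 0 < s := div_pos ht (ht.trans_le hts)
  have hs1 : s ≤ 1 := (div_le_one (ht.trans_le hts)).2 hts
  have htau_le : tau p lam t ≤ s ^ (a / 2) := by
    have hsq : s ^ a = (s ^ (a / 2)) ^ 2 := by
      rw [← rpow_natCast, ← rpow_mul hs0.le]; norm_num
    have h := tau_sq_le_rpow_mul p lam hai ht hts
    rw [htau, one_pow, mul_one, hsq] at h
    exact (pow_le_pow_iff_left₀ (sqrt_nonneg _) (rpow_nonneg hs0.le _) two_ne_zero).1 h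
  have h := one_add_log_sq_mul_rpow_le hs0 hs1 (half_pos ha)
  calc tau p lam t * (1 + log (tstar / t) ^ 2) ≤ (1 + log s ^ 2) * s ^ (a / 2) := by
        rw [log_div_sq_comm, mul_comm]; gcongr
    _ ≤ 1 + 16 / a ^ 2 := h.trans_eq (by field_simp; norm_num)

end LowFreqRate

lemma abs_mul_phi_le {φ ψ : ℝ → ℝ} {T tstar u m : ℝ} (hT : 0 ≤ T) (hu : 0 < u)
    (hm : m ^ 2 ≤ 1 + log (u / tstar) ^ 2) :
    T * |m * φ u| / u ≤ T * (1 + log (tstar / u) ^ 2) / u * √(Elow φ ψ tstar u) := by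
  have hφ : φ u = phiTilde φ ψ tstar u + log (u / tstar) * ψ u := by unfold phiTilde; ring
  calc T * |m * φ u| / u ≤ T * ((1 + log (u / tstar) ^ 2) * √(Elow φ ψ tstar u)) / u := by
        gcongr
        rw [hφ]
        exact abs_mul_add_mul_le_sqrt hm
    _ = T * (1 + log (tstar / u) ^ 2) / u * √(Elow φ ψ tstar u) := by
        rw [log_div_sq_comm]; ring

namespace IsWaveSol

variable {D : ℕ} {p : Fin D → ℝ} {lam : Fin D → ℤ} {φ ψ : ℝ → ℝ} {I : Set ℝ} {tstar t : ℝ}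

lemma hasDerivAt_phiTilde (h : IsWaveSol p lam φ ψ I) (ht : t ∈ I) (ht0 : t ≠ 0)
    (hts : tstar ≠ 0) :
    HasDerivAt (phiTilde φ ψ tstar) (tau p lam t ^ 2 * φ t * log (t / tstar) / t) t := by
  have hlog : HasDerivAt (fun u => log (u / tstar)) (1 / t) t := by
    convert ((hasDerivAt_id' t).div_const tstar).log (div_ne_zero ht0 hts) using 1
    field_simp
  refine ((h t ht).1.sub ((h t ht).2.mul hlog)).congr_deriv ?_
  field_simp
  ring

lemma hasDerivAt_Elow (h : IsWaveSol p lam φ ψ I) (ht : t ∈ I) (ht0 : t ≠ 0)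
    (hts : tstar ≠ 0) :
    HasDerivAt (Elow φ ψ tstar) (2 * tau p lam t ^ 2 * (φ t * (log (t / tstar) *
      phiTilde φ ψ tstar t - ψ t)) / t) t := by
  refine (((h t ht).2.pow 2).add ((h.hasDerivAt_phiTilde ht ht0 hts).pow 2)).congr_deriv ?_
  field_simp
  ring

lemma abs_deriv_psi_le (h : IsWaveSol p lam φ ψ I) (ht : t ∈ I) (ht0 : 0 < t) :
    |deriv ψ t| ≤ lowFreqRate p lam tstar t / t * √(Elow φ ψ tstar t) := by
  rw [(h t ht).2.deriv, neg_mul, neg_div, abs_neg, abs_div, abs_mul, abs_of_pos ht0,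
    abs_of_nonneg (sq_nonneg _), ← one_mul (φ t)]
  exact abs_mul_phi_le (sq_nonneg _) ht0 (by nlinarith [sq_nonneg (log (t / tstar))])

lemma abs_deriv_phiTilde_le (h : IsWaveSol p lam φ ψ I) (ht : t ∈ I) (ht0 : 0 < t)
    (hts : tstar ≠ 0) :
    |deriv (phiTilde φ ψ tstar) t| ≤ lowFreqRate p lam tstar t / t * √(Elow φ ψ tstar t) := by
  rw [(h.hasDerivAt_phiTilde ht ht0.ne' hts).deriv, abs_div, abs_of_pos ht0, mul_assoc,
    abs_mul, abs_of_nonneg (sq_nonneg _), mul_comm (φ t)]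
  exact abs_mul_phi_le (sq_nonneg _) ht0 (by linarith)

lemma neg_mul_le_deriv_Elow (h : IsWaveSol p lam φ ψ I) (ht : t ∈ I) (ht0 : 0 < t)
    (hts : tstar ≠ 0) :
    -(lowFreqRate p lam tstar t / t * Elow φ ψ tstar t) ≤ deriv (Elow φ ψ tstar) t := by
  rw [(h.hasDerivAt_Elow ht ht0.ne' hts).deriv, neg_le]
  have hφ : φ t = phiTilde φ ψ tstar t + log (t / tstar) * ψ t := by unfold phiTilde; ring
  have key := two_mul_abs_mul_le (X := ψ t) (Y := phiTilde φ ψ tstar t) (l := log (t / tstar))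
  rw [← hφ, log_div_sq_comm] at key
  have hτ := sq_nonneg (tau p lam t)
  rw [lowFreqRate, Elow, div_mul_eq_mul_div, neg_div', div_le_div_iff_of_pos_right ht0]
  nlinarith [neg_abs_le (φ t * (log (t / tstar) * phiTilde φ ψ tstar t - ψ t)),
    mul_le_mul_of_nonneg_left key hτ]

lemma Elow_le_exp_mul (h : IsWaveSol p lam φ ψ (Ioc 0 tstar)) (hts : 0 < tstar) {A : ℝ}
    (hint : IntegrableOn (fun u => lowFreqRate p lam tstar u / u) (Ioc 0 tstar))
    (hA : ∫ u in Ioc 0 tstar, lowFreqRate p lam tstar u / u ≤ A) (ht : t ∈ Ioc 0 tstar) :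
    Elow φ ψ tstar t ≤ exp A * Elow φ ψ tstar tstar := by
  have hsub : Icc t tstar ⊆ Ioc 0 tstar := fun u hu => ⟨ht.1.trans_le hu.1, hu.2⟩
  have hgronwall := le_mul_exp_integral_of_neg_mul_le_deriv ht.2
    (fun u hu => (h.hasDerivAt_Elow (hsub hu) (hsub hu).1.ne' hts.ne').differentiableAt.hasDerivAt)
    (((continuousOn_lowFreqRate hts).mono fun u hu => (hsub hu).1).div continuousOn_id
      fun u hu => (hsub hu).1.ne')
    (fun u hu => h.neg_mul_le_deriv_Elow (hsub (Ioo_subset_Icc_self hu))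
      (hsub (Ioo_subset_Icc_self hu)).1 hts.ne')
  have hint_le : ∫ u in t..tstar, lowFreqRate p lam tstar u / u ≤ A := by
    rw [intervalIntegral.integral_of_le ht.2]
    refine le_trans (setIntegral_mono_set hint ?_ ?_) hA
    · exact (ae_restrict_iff' measurableSet_Ioc).2 (ae_of_all _ fun u hu =>
        div_nonneg (lowFreqRate_nonneg u) hu.1.le)
    · exact (Ioc_subset_Ioc_left ht.1.le).eventuallyLE
  calc Elow φ ψ tstar t ≤ Elow φ ψ tstar tstar * exp A :=
        hgronwall.trans <|
          mul_le_mul_of_nonneg_left (exp_le_exp.2 hint_le) (by unfold Elow; positivity)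
    _ = exp A * Elow φ ψ tstar tstar := mul_comm _ _

lemma exists_tendsto_of_integral_le (h : IsWaveSol p lam φ ψ (Ioc 0 tstar)) (hts : 0 < tstar)
    (hrate : lowFreqRate p lam tstar tstar = 1) {B : ℝ}
    (hB : ∀ t ∈ Ioc 0 tstar, IntegrableOn (fun u => lowFreqRate p lam tstar u / u) (Ioc 0 t) ∧
      ∫ u in Ioc 0 t, lowFreqRate p lam tstar u / u ≤ B * lowFreqRate p lam tstar t) :
    ∃ psiInf phiInf : ℝ,
      Tendsto ψ (𝓝[>] 0) (𝓝 psiInf) ∧ Tendsto (phiTilde φ ψ tstar) (𝓝[>] 0) (𝓝 phiInf) ∧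
      (∀ t ∈ Ioc 0 tstar, |ψ t - psiInf| + |phiTilde φ ψ tstar t - phiInf| ≤
        2 * B * exp (B / 2) * lowFreqRate p lam tstar t * √(Elow φ ψ tstar tstar)) ∧
      psiInf ^ 2 + phiInf ^ 2 ≤ exp B * Elow φ ψ tstar tstar := by
  obtain ⟨hint, hle⟩ := hB tstar ⟨hts, le_rfl⟩
  rw [hrate, mul_one] at hle
  have hE t (ht : t ∈ Ioc 0 tstar) := h.Elow_le_exp_mul hts hint hle ht
  set Q := exp (B / 2) * √(Elow φ ψ tstar tstar) with hQ
  have hsqrt : ∀ u ∈ Ioc 0 tstar, √(Elow φ ψ tstar u) ≤ Q := fun u hu => by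
    rw [hQ, exp_half, ← sqrt_mul (exp_pos B).le]
    exact sqrt_le_sqrt (hE u hu)
  have hscatter : ∀ f : ℝ → ℝ, (∀ u ∈ Ioc 0 tstar, DifferentiableAt ℝ f u) →
      (∀ u ∈ Ioc 0 tstar, |deriv f u| ≤ lowFreqRate p lam tstar u / u * √(Elow φ ψ tstar u)) →
      ∃ l, Tendsto f (𝓝[>] 0) (𝓝 l) ∧
        ∀ t ∈ Ioc 0 tstar, |f t - l| ≤ Q * (B * lowFreqRate p lam tstar t) := by
    intro f hf hbd
    obtain ⟨l, hl, hfl⟩ := exists_tendsto_abs_sub_le_integral hts hf (hint.const_mul Q)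
      fun u hu => (hbd u hu).trans <| by
        rw [mul_comm Q]
        exact mul_le_mul_of_nonneg_left (hsqrt u hu) (div_nonneg (lowFreqRate_nonneg u) hu.1.le)
    refine ⟨l, hl, fun t ht => (hfl t ht).trans ?_⟩
    rw [integral_const_mul]
    gcongr
    exact (hB t ht).2
  obtain ⟨psiInf, hψ, hψrate⟩ := hscatter ψ (fun u hu => (h u hu).2.differentiableAt)
    fun u hu => h.abs_deriv_psi_le hu hu.1
  obtain ⟨phiInf, hφ, hφrate⟩ := hscatter (phiTilde φ ψ tstar)
    (fun u hu => (h.hasDerivAt_phiTilde hu hu.1.ne' hts.ne').differentiableAt)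
    fun u hu => h.abs_deriv_phiTilde_le hu hu.1 hts.ne'
  refine ⟨psiInf, phiInf, hψ, hφ, fun t ht => ?_, ?_⟩
  · calc |ψ t - psiInf| + |phiTilde φ ψ tstar t - phiInf|
        ≤ Q * (B * lowFreqRate p lam tstar t) + Q * (B * lowFreqRate p lam tstar t) :=
          add_le_add (hψrate t ht) (hφrate t ht)
      _ = 2 * B * exp (B / 2) * lowFreqRate p lam tstar t * √(Elow φ ψ tstar tstar) := by
          rw [hQ]; ring
  · exact le_of_tendsto ((hψ.pow 2).add (hφ.pow 2))
      (eventually_of_mem (Ioc_mem_nhdsGT hts) hE)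

end IsWaveSol

theorem wave_low_freq_scattering_limits_general (D : ℕ) (p : Fin D → ℝ)
    (hp : ∀ i, p i < 1) :
    ∃ C Clow : ℝ, 0 < C ∧ 0 < Clow ∧
      ∀ (lam : Fin D → ℤ), lam ≠ 0 →
      ∀ tstar : ℝ, 0 < tstar → tstar ≤ 1 → tau p lam tstar = 1 →
      ∀ φ ψ : ℝ → ℝ, IsWaveSol p lam φ ψ (Set.Ioc 0 tstar) →
        ∃ psiInf phiInf : ℝ,
          Tendsto ψ (𝓝[>] (0:ℝ)) (𝓝 psiInf) ∧
          Tendsto (phiTilde φ ψ tstar) (𝓝[>] (0:ℝ)) (𝓝 phiInf) ∧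
          (∀ t ∈ Set.Ioc (0:ℝ) tstar,
            |ψ t - psiInf| + |phiTilde φ ψ tstar t - phiInf| ≤
              C * (tau p lam t ^ 2 * (1 + Real.log (tstar / t) ^ 2))
                * Real.sqrt (Elow φ ψ tstar tstar) ∧
            C * (tau p lam t ^ 2 * (1 + Real.log (tstar / t) ^ 2))
                * Real.sqrt (Elow φ ψ tstar tstar) ≤
              C ^ 2 * tau p lam t * Real.sqrt (Elow φ ψ tstar tstar)) ∧
          psiInf ^ 2 + phiInf ^ 2 ≤ Clow * Elow φ ψ tstar tstar := by
  obtain ⟨a, ha, hai⟩ := exists_pos_forall_le (e := fun i => 2 - 2 * p i)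
    fun i => by linarith [hp i]
  set B := 4 * (2 + 16 / a ^ 2) / a
  set C := 2 * B * exp (B / 2) + (1 + 16 / a ^ 2)
  refine ⟨C, exp B, by positivity, exp_pos B,
    fun lam _ tstar hts _ htau φ ψ hsol => ?_⟩
  have hrate : lowFreqRate p lam tstar tstar = 1 := by simp [lowFreqRate, htau]
  obtain ⟨psiInf, phiInf, hψ, hφ, hbound, henergy⟩ := hsol.exists_tendsto_of_integral_le hts
    hrate fun t ht => integral_lowFreqRate_div_le ha hai hts ht.1
  have hC : 2 * B * exp (B / 2) ≤ C := le_add_of_nonneg_right (by positivity)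
  refine ⟨psiInf, phiInf, hψ, hφ, fun t ht => ⟨(hbound t ht).trans ?_, ?_⟩, henergy⟩
  · exact mul_le_mul_of_nonneg_right (mul_le_mul_of_nonneg_right hC (lowFreqRate_nonneg t))
      (sqrt_nonneg _)
  · have hτ := tau_mul_one_add_log_sq_le ha hai htau ht.1 ht.2
    have hτC : tau p lam t * (1 + log (tstar / t) ^ 2) ≤ C :=
      hτ.trans (le_add_of_nonneg_left (by positivity))
    calc C * (tau p lam t ^ 2 * (1 + log (tstar / t) ^ 2)) * √(Elow φ ψ tstar tstar)
        = C * tau p lam t * (tau p lam t * (1 + log (tstar / t) ^ 2)) *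
            √(Elow φ ψ tstar tstar) := by ring
      _ ≤ C * tau p lam t * C * √(Elow φ ψ tstar tstar) :=
          mul_le_mul_of_nonneg_right (mul_le_mul_of_nonneg_left hτC
            (mul_nonneg (by positivity) (sqrt_nonneg _))) (sqrt_nonneg _)
      _ = C ^ 2 * tau p lam t * √(Elow φ ψ tstar tstar) := by ring

/-- Proposition `prop:wave_low_freq_scat`(i): existence of limits of ψ and φ̃ at the
singularity, with quantitative rates. -/
theorem wave_low_freq_scattering_limits (D : ℕ) (hD : 2 ≤ D) (p : Fin D → ℝ)
    (hp : ∀ i, p i < 1) :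
    ∃ C Clow : ℝ, 0 < C ∧ 0 < Clow ∧
      ∀ (lam : Fin D → ℤ), lam ≠ 0 →
      ∀ tstar : ℝ, 0 < tstar → tstar ≤ 1 → tau p lam tstar = 1 →
      ∀ φ ψ : ℝ → ℝ, IsWaveSol p lam φ ψ (Set.Ioc 0 tstar) →
        ∃ psiInf phiInf : ℝ,
          Tendsto ψ (𝓝[>] (0:ℝ)) (𝓝 psiInf) ∧
          Tendsto (phiTilde φ ψ tstar) (𝓝[>] (0:ℝ)) (𝓝 phiInf) ∧
          (∀ t ∈ Set.Ioc (0:ℝ) tstar,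
            |ψ t - psiInf| + |phiTilde φ ψ tstar t - phiInf| ≤
              C * (tau p lam t ^ 2 * (1 + Real.log (tstar / t) ^ 2))
                * Real.sqrt (Elow φ ψ tstar tstar) ∧
            C * (tau p lam t ^ 2 * (1 + Real.log (tstar / t) ^ 2))
                * Real.sqrt (Elow φ ψ tstar tstar) ≤
              C ^ 2 * tau p lam t * Real.sqrt (Elow φ ψ tstar tstar)) ∧
          psiInf ^ 2 + phiInf ^ 2 ≤ Clow * Elow φ ψ tstar tstar :=
  wave_low_freq_scattering_limits_general D p hp
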